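/- For every integer m ≥ 1 the following operator identities hold on smooth functions f : ℝ² → ℝ: (i) for every j with 1 ≤ j ≤ 2m, [□^m_j, □]f = −j(2m−j+1)·□^m_{j−1}f pointwise; (ii) for every j with 0 ≤ j ≤ 2m, [□^m_j, σ]f = (m−j)·□^m_j f pointwise. -/

import Mathlib

/-- Partial derivative of a real-valued function on `ℝ²` in the direction `v`. -/
noncomputable def pdv (v : ℝ × ℝ) (f : ℝ × ℝ → ℝ) : ℝ × ℝ → ℝ := fun p => fderiv ℝ f p v

/-- Partial derivative with respect to the first coordinate (`ξ`). -/
noncomputable def px : (ℝ × ℝ → ℝ) → ℝ × ℝ → ℝ := pdv (1, 0)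

/-- Partial derivative with respect to the second coordinate (`η`). -/
noncomputable def py : (ℝ × ℝ → ℝ) → ℝ × ℝ → ℝ := pdv (0, 1)

/-- The operator `□f = ∂_ξ f − ∂_η f`. -/
noncomputable def box (f : ℝ × ℝ → ℝ) : ℝ × ℝ → ℝ := fun p => px f p - py f p

/-- The operator `σf = ξ∂_ξ f + η∂_η f + (1/2)f`. -/
noncomputable def sig (f : ℝ × ℝ → ℝ) : ℝ × ℝ → ℝ :=
  fun p => p.1 * px f p + p.2 * py f p + (1 / 2) * f p

/-- The operator `τf = ξ²∂_ξ f − η²∂_η f + ((ξ−η)/2)f`. -/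
noncomputable def tau (f : ℝ × ℝ → ℝ) : ℝ × ℝ → ℝ :=
  fun p => p.1 ^ 2 * px f p - p.2 ^ 2 * py f p + ((p.1 - p.2) / 2) * f p

/-- `□^m_0 = □^m` and `□^m_{j+1} = [□^m_j, τ]`. -/
noncomputable def boxmj (m : ℕ) : ℕ → (ℝ × ℝ → ℝ) → ℝ × ℝ → ℝ
  | 0, f => box^[m] f
  | j + 1, f => boxmj m j (tau f) - tau (boxmj m j f)

variable {f g h : ℝ × ℝ → ℝ} {p v w : ℝ × ℝ} {c : ℝ}

lemma smooth_pdv (v : ℝ × ℝ) (hf : ContDiff ℝ (⊤ : ℕ∞) f) :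
    ContDiff ℝ (⊤ : ℕ∞) (pdv v f) := (hf.fderiv_right (by simp)).clm_apply contDiff_const

lemma dAt (hg : ContDiff ℝ (⊤ : ℕ∞) g) (p : ℝ × ℝ) : DifferentiableAt ℝ g p :=
  (hg.differentiable (by simp)).differentiableAt

lemma pdv_add (hg : DifferentiableAt ℝ g p) (hh : DifferentiableAt ℝ h p) (v : ℝ × ℝ) :
    pdv v (fun q => g q + h q) p = pdv v g p + pdv v h p := by
  simp [pdv, fderiv_fun_add hg hh]

lemma pdv_sub (hg : DifferentiableAt ℝ g p) (hh : DifferentiableAt ℝ h p) (v : ℝ × ℝ) :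
    pdv v (fun q => g q - h q) p = pdv v g p - pdv v h p := by
  simp [pdv, fderiv_fun_sub hg hh]

lemma pdv_mul (hg : DifferentiableAt ℝ g p) (hh : DifferentiableAt ℝ h p) (v : ℝ × ℝ) :
    pdv v (fun q => g q * h q) p = pdv v g p * h p + g p * pdv v h p := by
  simp [pdv, fderiv_fun_mul hg hh]; ring

lemma pdv_const_mul (hg : DifferentiableAt ℝ g p) (c : ℝ) (v : ℝ × ℝ) :
    pdv v (fun q => c * g q) p = c * pdv v g p := by
  simp [pdv, fderiv_const_mul hg]

lemma pdv_fst (v p : ℝ × ℝ) : pdv v (fun q => q.1) p = v.1 := by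
  simp only [pdv, fderiv_fst]; rfl

lemma pdv_snd (v p : ℝ × ℝ) : pdv v (fun q => q.2) p = v.2 := by
  simp only [pdv, fderiv_snd]; rfl

lemma pdv_comm (hf : ContDiff ℝ (⊤ : ℕ∞) f) (v w : ℝ × ℝ) (p : ℝ × ℝ) :
    pdv v (pdv w f) p = pdv w (pdv v f) p := by
  have hsymm : IsSymmSndFDerivAt ℝ f p := (hf.contDiffAt).isSymmSndFDerivAt (by rw [minSmoothness_of_isRCLikeNormedField]; exact WithTop.coe_le_coe.mpr (le_top : (2:ℕ∞) ≤ ⊤))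
  have hd : DifferentiableAt ℝ (fderiv ℝ f) p :=
    ((hf.fderiv_right (WithTop.coe_le_coe.mpr (le_top : ((1+1 : ℕ) : ℕ∞) ≤ ⊤))).differentiable one_ne_zero).differentiableAt
  have key : ∀ u z : ℝ × ℝ, pdv u (pdv z f) p = fderiv ℝ (fderiv ℝ f) p u z := by
    intro u z
    show fderiv ℝ (fun q => (fderiv ℝ f q) z) p u = _
    rw [fderiv_clm_apply hd (differentiableAt_const z)]
    simp
  rw [key, key, hsymm v w]

-- smoothness of the operators
lemma smooth_px (hf : ContDiff ℝ (⊤ : ℕ∞) f) : ContDiff ℝ (⊤ : ℕ∞) (px f) := smooth_pdv _ hf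
lemma smooth_py (hf : ContDiff ℝ (⊤ : ℕ∞) f) : ContDiff ℝ (⊤ : ℕ∞) (py f) := smooth_pdv _ hf

lemma smooth_box (hf : ContDiff ℝ (⊤ : ℕ∞) f) : ContDiff ℝ (⊤ : ℕ∞) (box f) :=
  (smooth_px hf).sub (smooth_py hf)

lemma smooth_sig (hf : ContDiff ℝ (⊤ : ℕ∞) f) : ContDiff ℝ (⊤ : ℕ∞) (sig f) := by
  have h1 := smooth_px hf; have h2 := smooth_py hf
  unfold sig
  exact ((contDiff_fst.mul h1).add (contDiff_snd.mul h2)).add (contDiff_const.mul hf)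

lemma smooth_tau (hf : ContDiff ℝ (⊤ : ℕ∞) f) : ContDiff ℝ (⊤ : ℕ∞) (tau f) := by
  have h1 := smooth_px hf; have h2 := smooth_py hf
  unfold tau
  exact (((contDiff_fst.pow 2).mul h1).sub ((contDiff_snd.pow 2).mul h2)).add
    (((contDiff_fst.sub contDiff_snd).div_const 2).mul hf)

lemma pdv_box (hf : ContDiff ℝ (⊤ : ℕ∞) f) (v p : ℝ × ℝ) :
    pdv v (box f) p = pdv v (pdv (1,0) f) p - pdv v (pdv (0,1) f) p :=
  pdv_sub (dAt (smooth_px hf) p) (dAt (smooth_py hf) p) v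

lemma pdv_sig (hf : ContDiff ℝ (⊤ : ℕ∞) f) (v p : ℝ × ℝ) :
    pdv v (sig f) p = v.1 * pdv (1,0) f p + p.1 * pdv v (pdv (1,0) f) p
      + v.2 * pdv (0,1) f p + p.2 * pdv v (pdv (0,1) f) p + (1/2) * pdv v f p := by
  have h1 : ContDiff ℝ (⊤ : ℕ∞) (pdv (1,0) f) := smooth_pdv _ hf
  have h2 : ContDiff ℝ (⊤ : ℕ∞) (pdv (0,1) f) := smooth_pdv _ hf
  have ha : DifferentiableAt ℝ (fun q : ℝ × ℝ => q.1 * pdv (1,0) f q) p :=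
    dAt (contDiff_fst.mul h1) p
  have hb : DifferentiableAt ℝ (fun q : ℝ × ℝ => q.2 * pdv (0,1) f q) p :=
    dAt (contDiff_snd.mul h2) p
  have hc : DifferentiableAt ℝ (fun q : ℝ × ℝ => (1/2 : ℝ) * f q) p :=
    dAt (contDiff_const.mul hf) p
  calc pdv v (sig f) p
      = pdv v (fun q => (fun q : ℝ × ℝ => q.1 * pdv (1,0) f q + q.2 * pdv (0,1) f q) q
          + (fun q : ℝ × ℝ => (1/2 : ℝ) * f q) q) p := rfl
    _ = pdv v (fun q : ℝ × ℝ => q.1 * pdv (1,0) f q + q.2 * pdv (0,1) f q) p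
        + pdv v (fun q : ℝ × ℝ => (1/2 : ℝ) * f q) p := pdv_add (ha.add hb) hc v
    _ = pdv v (fun q : ℝ × ℝ => q.1 * pdv (1,0) f q) p
        + pdv v (fun q : ℝ × ℝ => q.2 * pdv (0,1) f q) p
        + pdv v (fun q : ℝ × ℝ => (1/2 : ℝ) * f q) p := by rw [pdv_add ha hb]
    _ = _ := by
        rw [pdv_mul (dAt contDiff_fst p) (dAt h1 p), pdv_mul (dAt contDiff_snd p) (dAt h2 p),
          pdv_const_mul (dAt hf p), pdv_fst, pdv_snd]
        ring

lemma pdv_tau (hf : ContDiff ℝ (⊤ : ℕ∞) f) (v p : ℝ × ℝ) :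
    pdv v (tau f) p = 2 * p.1 * v.1 * pdv (1,0) f p + p.1 ^ 2 * pdv v (pdv (1,0) f) p
      - (2 * p.2 * v.2 * pdv (0,1) f p + p.2 ^ 2 * pdv v (pdv (0,1) f) p)
      + ((v.1 - v.2)/2) * f p + ((p.1 - p.2)/2) * pdv v f p := by
  have h1 : ContDiff ℝ (⊤ : ℕ∞) (pdv (1,0) f) := smooth_pdv _ hf
  have h2 : ContDiff ℝ (⊤ : ℕ∞) (pdv (0,1) f) := smooth_pdv _ hf
  have ha : DifferentiableAt ℝ (fun q : ℝ × ℝ => q.1 ^ 2 * pdv (1,0) f q) p :=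
    dAt ((contDiff_fst.pow 2).mul h1) p
  have hb : DifferentiableAt ℝ (fun q : ℝ × ℝ => q.2 ^ 2 * pdv (0,1) f q) p :=
    dAt ((contDiff_snd.pow 2).mul h2) p
  have hc : DifferentiableAt ℝ (fun q : ℝ × ℝ => (q.1 - q.2)/2 * f q) p :=
    dAt (((contDiff_fst.sub contDiff_snd).div_const 2).mul hf) p
  have hsq1 : pdv v (fun q : ℝ × ℝ => q.1 ^ 2) p = 2 * p.1 * v.1 := by
    have e : (fun q : ℝ × ℝ => q.1 ^ 2) = fun q : ℝ × ℝ => q.1 * q.1 := by funext q; ring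
    rw [e, pdv_mul (dAt contDiff_fst p) (dAt contDiff_fst p), pdv_fst]; ring
  have hsq2 : pdv v (fun q : ℝ × ℝ => q.2 ^ 2) p = 2 * p.2 * v.2 := by
    have e : (fun q : ℝ × ℝ => q.2 ^ 2) = fun q : ℝ × ℝ => q.2 * q.2 := by funext q; ring
    rw [e, pdv_mul (dAt contDiff_snd p) (dAt contDiff_snd p), pdv_snd]; ring
  have hlin : pdv v (fun q : ℝ × ℝ => (q.1 - q.2)/2) p = (v.1 - v.2)/2 := by
    have e : (fun q : ℝ × ℝ => (q.1 - q.2)/2)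
        = fun q : ℝ × ℝ => (1/2 : ℝ) * ((fun q : ℝ × ℝ => q.1) q - (fun q : ℝ × ℝ => q.2) q) := by
      funext q; ring
    rw [e, pdv_const_mul (dAt (contDiff_fst.sub contDiff_snd) p),
      pdv_sub (dAt contDiff_fst p) (dAt contDiff_snd p), pdv_fst, pdv_snd]; ring
  calc pdv v (tau f) p
      = pdv v (fun q => (fun q : ℝ × ℝ => q.1 ^ 2 * pdv (1,0) f q - q.2 ^ 2 * pdv (0,1) f q) q
          + (fun q : ℝ × ℝ => (q.1 - q.2)/2 * f q) q) p := rfl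
    _ = pdv v (fun q : ℝ × ℝ => q.1 ^ 2 * pdv (1,0) f q - q.2 ^ 2 * pdv (0,1) f q) p
        + pdv v (fun q : ℝ × ℝ => (q.1 - q.2)/2 * f q) p := pdv_add (ha.sub hb) hc v
    _ = pdv v (fun q : ℝ × ℝ => q.1 ^ 2 * pdv (1,0) f q) p
        - pdv v (fun q : ℝ × ℝ => q.2 ^ 2 * pdv (0,1) f q) p
        + pdv v (fun q : ℝ × ℝ => (q.1 - q.2)/2 * f q) p := by rw [pdv_sub ha hb]
    _ = _ := by
        rw [pdv_mul (dAt (contDiff_fst.pow 2) p) (dAt h1 p),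
          pdv_mul (dAt (contDiff_snd.pow 2) p) (dAt h2 p),
          pdv_mul (dAt ((contDiff_fst.sub contDiff_snd).div_const 2) p) (dAt hf p),
          hsq1, hsq2, hlin]
        ring

lemma box_tau_comm0 (hf : ContDiff ℝ (⊤ : ℕ∞) f) :
    tau (box f) = fun p => box (tau f) p - 2 * sig f p := by
  funext p
  have c1 : pdv (0,1) (pdv (1,0) f) p = pdv (1,0) (pdv (0,1) f) p := pdv_comm hf (0,1) (1,0) p
  show p.1 ^ 2 * pdv (1,0) (box f) p - p.2 ^ 2 * pdv (0,1) (box f) p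
      + ((p.1 - p.2)/2) * box f p
    = (pdv (1,0) (tau f) p - pdv (0,1) (tau f) p) - 2 * sig f p
  rw [pdv_box hf (1,0) p, pdv_box hf (0,1) p, pdv_tau hf (1,0) p, pdv_tau hf (0,1) p]
  show _ = _ - 2 * (p.1 * pdv (1,0) f p + p.2 * pdv (0,1) f p + (1/2) * f p)
  show p.1^2 * (pdv (1,0) (pdv (1,0) f) p - pdv (1,0) (pdv (0,1) f) p)
      - p.2^2 * (pdv (0,1) (pdv (1,0) f) p - pdv (0,1) (pdv (0,1) f) p)
      + ((p.1 - p.2)/2) * (pdv (1,0) f p - pdv (0,1) f p) = _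
  rw [c1]
  norm_num; ring

lemma box_sig_comm0 (hf : ContDiff ℝ (⊤ : ℕ∞) f) :
    sig (box f) = fun p => box (sig f) p - box f p := by
  funext p
  have c1 : pdv (0,1) (pdv (1,0) f) p = pdv (1,0) (pdv (0,1) f) p := pdv_comm hf (0,1) (1,0) p
  show p.1 * pdv (1,0) (box f) p + p.2 * pdv (0,1) (box f) p + (1/2) * box f p
    = (pdv (1,0) (sig f) p - pdv (0,1) (sig f) p) - box f p
  rw [pdv_box hf (1,0) p, pdv_box hf (0,1) p, pdv_sig hf (1,0) p, pdv_sig hf (0,1) p]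
  show _ = _ - (pdv (1,0) f p - pdv (0,1) f p)
  show p.1 * (pdv (1,0) (pdv (1,0) f) p - pdv (1,0) (pdv (0,1) f) p)
      + p.2 * (pdv (0,1) (pdv (1,0) f) p - pdv (0,1) (pdv (0,1) f) p)
      + (1/2) * (pdv (1,0) f p - pdv (0,1) f p) = _
  rw [c1]
  norm_num; ring

lemma sig_tau_comm0 (hf : ContDiff ℝ (⊤ : ℕ∞) f) :
    tau (sig f) = fun p => sig (tau f) p - tau f p := by
  funext p
  have c1 : pdv (0,1) (pdv (1,0) f) p = pdv (1,0) (pdv (0,1) f) p := pdv_comm hf (0,1) (1,0) p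
  show p.1 ^ 2 * pdv (1,0) (sig f) p - p.2 ^ 2 * pdv (0,1) (sig f) p
      + ((p.1 - p.2)/2) * sig f p
    = (p.1 * pdv (1,0) (tau f) p + p.2 * pdv (0,1) (tau f) p + (1/2) * tau f p) - tau f p
  rw [pdv_sig hf (1,0) p, pdv_sig hf (0,1) p, pdv_tau hf (1,0) p, pdv_tau hf (0,1) p]
  show _ + ((p.1 - p.2)/2) * (p.1 * pdv (1,0) f p + p.2 * pdv (0,1) f p + (1/2) * f p) = _
  show _ = _ + (1/2) * (p.1^2 * pdv (1,0) f p - p.2^2 * pdv (0,1) f p + ((p.1-p.2)/2) * f p)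
      - (p.1^2 * pdv (1,0) f p - p.2^2 * pdv (0,1) f p + ((p.1-p.2)/2) * f p)
  rw [c1]
  norm_num; ring

lemma sig_tau_comm (hf : ContDiff ℝ (⊤ : ℕ∞) f) :
    tau (sig f) = fun p => sig (tau f) p - tau f p := sig_tau_comm0 hf

lemma box_tau_comm (hf : ContDiff ℝ (⊤ : ℕ∞) f) :
    tau (box f) = fun p => box (tau f) p + (-2 : ℝ) * sig f p := by
  rw [box_tau_comm0 hf]; funext p; ring

lemma box_tau_comm' (hf : ContDiff ℝ (⊤ : ℕ∞) f) :
    box (tau f) = fun p => tau (box f) p + (2 : ℝ) * sig f p := by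
  rw [box_tau_comm0 hf]; funext p; ring

lemma box_sig_comm (hf : ContDiff ℝ (⊤ : ℕ∞) f) :
    box (sig f) = fun p => sig (box f) p + (1 : ℝ) * box f p := by
  funext p
  have h := congrFun (box_sig_comm0 hf) p
  beta_reduce at h
  linarith
lemma box_sub (hg : ContDiff ℝ (⊤ : ℕ∞) g) (hh : ContDiff ℝ (⊤ : ℕ∞) h) :
    box (fun q => g q - h q) = fun q => box g q - box h q := by
  funext p
  show pdv (1,0) (fun q => g q - h q) p - pdv (0,1) (fun q => g q - h q) p = _
  rw [pdv_sub (dAt hg p) (dAt hh p), pdv_sub (dAt hg p) (dAt hh p)]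
  show _ = (pdv (1,0) g p - pdv (0,1) g p) - (pdv (1,0) h p - pdv (0,1) h p)
  ring

lemma box_aff (hg : ContDiff ℝ (⊤ : ℕ∞) g) (hh : ContDiff ℝ (⊤ : ℕ∞) h) (c : ℝ) :
    box (fun q => g q + c * h q) = fun q => box g q + c * box h q := by
  funext p
  have dh : DifferentiableAt ℝ (fun q => c * h q) p := (dAt hh p).const_mul c
  show pdv (1,0) (fun q => g q + c * h q) p - pdv (0,1) (fun q => g q + c * h q) p = _
  rw [pdv_add (dAt hg p) dh, pdv_add (dAt hg p) dh,
    pdv_const_mul (dAt hh p), pdv_const_mul (dAt hh p)]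
  show _ = (pdv (1,0) g p - pdv (0,1) g p) + c * (pdv (1,0) h p - pdv (0,1) h p)
  ring

lemma sig_sub (hg : ContDiff ℝ (⊤ : ℕ∞) g) (hh : ContDiff ℝ (⊤ : ℕ∞) h) :
    sig (fun q => g q - h q) = fun q => sig g q - sig h q := by
  funext p
  show p.1 * pdv (1,0) (fun q => g q - h q) p + p.2 * pdv (0,1) (fun q => g q - h q) p
      + (1/2) * (g p - h p) = _
  rw [pdv_sub (dAt hg p) (dAt hh p), pdv_sub (dAt hg p) (dAt hh p)]
  show _ = (p.1 * pdv (1,0) g p + p.2 * pdv (0,1) g p + (1/2) * g p)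
      - (p.1 * pdv (1,0) h p + p.2 * pdv (0,1) h p + (1/2) * h p)
  ring

lemma tau_sub (hg : ContDiff ℝ (⊤ : ℕ∞) g) (hh : ContDiff ℝ (⊤ : ℕ∞) h) :
    tau (fun q => g q - h q) = fun q => tau g q - tau h q := by
  funext p
  show p.1 ^ 2 * pdv (1,0) (fun q => g q - h q) p - p.2 ^ 2 * pdv (0,1) (fun q => g q - h q) p
      + ((p.1 - p.2)/2) * (g p - h p) = _
  rw [pdv_sub (dAt hg p) (dAt hh p), pdv_sub (dAt hg p) (dAt hh p)]
  show _ = (p.1 ^ 2 * pdv (1,0) g p - p.2 ^ 2 * pdv (0,1) g p + ((p.1 - p.2)/2) * g p)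
      - (p.1 ^ 2 * pdv (1,0) h p - p.2 ^ 2 * pdv (0,1) h p + ((p.1 - p.2)/2) * h p)
  ring

lemma tau_aff (hg : ContDiff ℝ (⊤ : ℕ∞) g) (hh : ContDiff ℝ (⊤ : ℕ∞) h) (c : ℝ) :
    tau (fun q => g q + c * h q) = fun q => tau g q + c * tau h q := by
  funext p
  have dh : DifferentiableAt ℝ (fun q => c * h q) p := (dAt hh p).const_mul c
  show p.1 ^ 2 * pdv (1,0) (fun q => g q + c * h q) p
      - p.2 ^ 2 * pdv (0,1) (fun q => g q + c * h q) p
      + ((p.1 - p.2)/2) * (g p + c * h p) = _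
  rw [pdv_add (dAt hg p) dh, pdv_add (dAt hg p) dh,
    pdv_const_mul (dAt hh p), pdv_const_mul (dAt hh p)]
  show _ = (p.1 ^ 2 * pdv (1,0) g p - p.2 ^ 2 * pdv (0,1) g p + ((p.1 - p.2)/2) * g p)
      + c * (p.1 ^ 2 * pdv (1,0) h p - p.2 ^ 2 * pdv (0,1) h p + ((p.1 - p.2)/2) * h p)
  ring

-- iterates of box
lemma smooth_iter (m : ℕ) : ∀ {f : ℝ × ℝ → ℝ}, ContDiff ℝ (⊤ : ℕ∞) f → ContDiff ℝ (⊤ : ℕ∞) (box^[m] f) := by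
  induction m with
  | zero => intro f hf; simpa using hf
  | succ m ih =>
      intro f hf
      rw [Function.iterate_succ_apply]
      exact ih (smooth_box hf)

lemma iter_box_comm (m : ℕ) (g : ℝ × ℝ → ℝ) : box^[m] (box g) = box (box^[m] g) :=
  (Function.iterate_succ_apply box m g).symm.trans (Function.iterate_succ_apply' box m g)

lemma iter_sub (m : ℕ) : ∀ {g h : ℝ × ℝ → ℝ}, ContDiff ℝ (⊤ : ℕ∞) g → ContDiff ℝ (⊤ : ℕ∞) h →
    box^[m] (fun q => g q - h q) = fun q => box^[m] g q - box^[m] h q := by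
  induction m with
  | zero => intro g h _ _; simp
  | succ m ih =>
      intro g h hg hh
      rw [Function.iterate_succ_apply, box_sub hg hh, ih (smooth_box hg) (smooth_box hh),
        Function.iterate_succ_apply, Function.iterate_succ_apply]

lemma iter_aff (m : ℕ) : ∀ {g h : ℝ × ℝ → ℝ}, ContDiff ℝ (⊤ : ℕ∞) g → ContDiff ℝ (⊤ : ℕ∞) h → ∀ c : ℝ,
    box^[m] (fun q => g q + c * h q) = fun q => box^[m] g q + c * box^[m] h q := by
  induction m with
  | zero => intro g h _ _ c; simp
  | succ m ih =>
      intro g h hg hh c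
      rw [Function.iterate_succ_apply, box_aff hg hh, ih (smooth_box hg) (smooth_box hh),
        Function.iterate_succ_apply, Function.iterate_succ_apply]

-- boxmj basics
lemma boxmj_zero (m : ℕ) (g : ℝ × ℝ → ℝ) : boxmj m 0 g = box^[m] g := rfl

lemma boxmj_succ (m j : ℕ) (g : ℝ × ℝ → ℝ) :
    boxmj m (j+1) g = fun q => boxmj m j (tau g) q - tau (boxmj m j g) q := rfl

lemma smooth_boxmj (m : ℕ) : ∀ j : ℕ, ∀ {f : ℝ × ℝ → ℝ}, ContDiff ℝ (⊤ : ℕ∞) f →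
    ContDiff ℝ (⊤ : ℕ∞) (boxmj m j f) := by
  intro j
  induction j with
  | zero => intro f hf; exact smooth_iter m hf
  | succ j ih =>
      intro f hf
      rw [boxmj_succ]
      exact (ih (smooth_tau hf)).sub (smooth_tau (ih hf))

lemma boxmj_sub (m : ℕ) : ∀ j : ℕ, ∀ {g h : ℝ × ℝ → ℝ}, ContDiff ℝ (⊤ : ℕ∞) g → ContDiff ℝ (⊤ : ℕ∞) h →
    boxmj m j (fun q => g q - h q) = fun q => boxmj m j g q - boxmj m j h q := by
  intro j
  induction j with
  | zero => intro g h hg hh; exact iter_sub m hg hh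
  | succ j ih =>
      intro g h hg hh
      rw [boxmj_succ, boxmj_succ, boxmj_succ, tau_sub hg hh,
        ih (smooth_tau hg) (smooth_tau hh), ih hg hh,
        tau_sub (smooth_boxmj m j hg) (smooth_boxmj m j hh)]
      funext p
      (try simp only [])
      ring

lemma boxmj_aff (m : ℕ) : ∀ j : ℕ, ∀ {g h : ℝ × ℝ → ℝ}, ContDiff ℝ (⊤ : ℕ∞) g → ContDiff ℝ (⊤ : ℕ∞) h →
    ∀ c : ℝ, boxmj m j (fun q => g q + c * h q) = fun q => boxmj m j g q + c * boxmj m j h q := by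
  intro j
  induction j with
  | zero => intro g h hg hh c; exact iter_aff m hg hh c
  | succ j ih =>
      intro g h hg hh c
      rw [boxmj_succ, boxmj_succ, boxmj_succ, tau_aff hg hh,
        ih (smooth_tau hg) (smooth_tau hh), ih hg hh,
        tau_aff (smooth_boxmj m j hg) (smooth_boxmj m j hh)]
      funext p
      (try simp only [])
      ring

-- base case for sig commutator
lemma iter_sig (m : ℕ) : ∀ {f : ℝ × ℝ → ℝ}, ContDiff ℝ (⊤ : ℕ∞) f →
    box^[m] (sig f) = fun p => sig (box^[m] f) p + (m : ℝ) * box^[m] f p := by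
  induction m with
  | zero => intro f hf; funext p; simp
  | succ m ih =>
      intro f hf
      rw [Function.iterate_succ_apply, box_sig_comm hf,
        iter_aff m (smooth_sig (smooth_box hf)) (smooth_box hf),
        ih (smooth_box hf), Function.iterate_succ_apply]
      funext p
      (try simp only [])
      push_cast
      ring

lemma key_sig (m : ℕ) : ∀ j : ℕ, ∀ f : ℝ × ℝ → ℝ, ContDiff ℝ (⊤ : ℕ∞) f →
    boxmj m j (sig f) = fun p => sig (boxmj m j f) p + ((m : ℝ) - (j : ℝ)) * boxmj m j f p := by
  intro j
  induction j with
  | zero =>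
      intro f hf
      rw [boxmj_zero, boxmj_zero, iter_sig m hf]
      funext p; (try simp only []); push_cast; ring
  | succ j ih =>
      intro f hf
      have hτ := smooth_tau hf
      have hB := smooth_boxmj m j hf
      have hBτ := smooth_boxmj m j hτ
      rw [boxmj_succ m j (sig f), boxmj_succ m j f, sig_tau_comm hf,
        boxmj_sub m j (smooth_sig hτ) hτ, ih (tau f) hτ, ih f hf,
        tau_aff (smooth_sig hB) hB, sig_tau_comm hB,
        sig_sub hBτ (smooth_tau hB)]
      funext p
      (try simp only [])
      push_cast
      ring

lemma key_box (m : ℕ) : ∀ j : ℕ, ∀ f : ℝ × ℝ → ℝ, ContDiff ℝ (⊤ : ℕ∞) f →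
    boxmj m (j+1) (box f) = fun p => box (boxmj m (j+1) f) p
      + (-(((j : ℝ)+1) * (2*(m : ℝ) - (j : ℝ)))) * boxmj m j f p := by
  intro j
  induction j with
  | zero =>
      intro f hf
      have hτ := smooth_tau hf
      rw [boxmj_succ m 0 (box f), boxmj_succ m 0 f, boxmj_zero, boxmj_zero, boxmj_zero,
        boxmj_zero, box_tau_comm hf,
        iter_aff m (smooth_box hτ) (smooth_sig hf), iter_sig m hf,
        iter_box_comm m (tau f), iter_box_comm m f,
        box_tau_comm (smooth_iter m hf),
        box_sub (smooth_iter m hτ) (smooth_tau (smooth_iter m hf)),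
        box_tau_comm' (smooth_iter m hf)]
      funext p
      (try simp only [])
      push_cast
      ring
  | succ j ih =>
      intro f hf
      have hτ := smooth_tau hf
      have hB1 := smooth_boxmj m (j+1) hf
      have hB1τ := smooth_boxmj m (j+1) hτ
      have hBj := smooth_boxmj m j hf
      rw [boxmj_succ m (j+1) (box f), boxmj_succ m (j+1) f, box_tau_comm hf,
        boxmj_aff m (j+1) (smooth_box hτ) (smooth_sig hf),
        ih (tau f) hτ, ih f hf, key_sig m (j+1) f hf,
        tau_aff (smooth_box hB1) hBj,
        box_sub hB1τ (smooth_tau hB1),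
        box_tau_comm' hB1]
      funext p
      (try simp only [])
      rw [congrFun (boxmj_succ m j f) p]
      (try simp only [])
      push_cast
      ring

/-- Commutation relations: `[□^m_j, □] = −j(2m−j+1)□^m_{j−1}` for `1 ≤ j ≤ 2m`, and
`[□^m_j, σ] = (m−j)□^m_j` for `0 ≤ j ≤ 2m`, on smooth functions. -/
theorem boxmj_commutators (m : ℕ) (hm : 1 ≤ m) (f : ℝ × ℝ → ℝ) (hf : ContDiff ℝ (⊤ : ℕ∞) f) :
    (∀ j : ℕ, 1 ≤ j → j ≤ 2 * m → ∀ p : ℝ × ℝ,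
      boxmj m j (box f) p - box (boxmj m j f) p =
        -((j : ℝ) * (2 * (m : ℝ) - (j : ℝ) + 1)) * boxmj m (j - 1) f p) ∧
    (∀ j : ℕ, j ≤ 2 * m → ∀ p : ℝ × ℝ,
      boxmj m j (sig f) p - sig (boxmj m j f) p = ((m : ℝ) - (j : ℝ)) * boxmj m j f p) := by
  constructor
  · intro j hj1 hj2 p
    obtain ⟨k, rfl⟩ : ∃ k, j = k + 1 := ⟨j - 1, (Nat.succ_pred_eq_of_pos hj1).symm⟩
    have h := congrFun (key_box m k f hf) p
    beta_reduce at h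
    rw [h, show k + 1 - 1 = k from rfl]
    push_cast
    ring
  · intro j _ p
    have h := congrFun (key_sig m j f hf) p
    beta_reduce at h
    rw [h]
    ring
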